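/- Let R be a Noetherian commutative ring, and I an ideal of R. Then grade(I) ≤ height(I). -/

import Mathlib

/-!
A regular element `r` lies in no minimal prime. Hence a chain of primes of `R ⧸ (r)` ending at
`P ⧸ (r)` pulls back to a chain in `R` ending at `P` whose bottom is not minimal, so it extends
by one more prime: `height (P ⧸ (r)) + 1 ≤ height P`. Induction along a regular sequence in `P`
bounds its length by `height P`.
-/

/-- The grade of an ideal: the supremum of the lengths of `R`-regular
sequences contained in the ideal. -/
noncomputable def idealGrade {R : Type*} [CommRing R] (I : Ideal R) : ℕ∞ :=
  ⨆ (rs : List R) (_ : ∀ x ∈ rs, x ∈ I) (_ : RingTheory.Sequence.IsRegular R rs),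
    (rs.length : ℕ∞)

/-- The height of an ideal: the infimum of the heights (in the poset of
primes) of the prime ideals containing it. -/
noncomputable def idealHeight {R : Type*} [CommRing R] (I : Ideal R) : ℕ∞ :=
  ⨅ (P : PrimeSpectrum R) (_ : I ≤ P.asIdeal), Order.height P

open RingTheory.Sequence
open scoped Pointwise

theorem Order.height_add_one_le_height_of_strictMono {α β : Type*} [Preorder α] [Preorder β]
    {f : α → β} (hf : StrictMono f) (hmin : ∀ a, ¬IsMin (f a)) (a : α) :
    height a + 1 ≤ height (f a) := by
  have : Nonempty {p : LTSeries α // p.last = a} := ⟨⟨RelSeries.singleton _ a, rfl⟩⟩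
  rw [height_eq_iSup_last_eq, iSup_subtype', ENat.iSup_add]
  refine iSup_le fun ⟨p, hp⟩ => ?_
  obtain ⟨b, hb⟩ : ∃ b, b < (p.map f hf).head := not_isMin_iff.mp (hmin p.head)
  simpa using length_le_height (p := (p.map f hf).cons b hb) (x := f a) (by simp [hp])

section

variable {R : Type*} [CommRing R] {r : R}

theorem IsSMulRegular.not_isMin_of_mem (hr : IsSMulRegular R r) {q : PrimeSpectrum R}
    (hq : r ∈ q.asIdeal) : ¬IsMin q := by
  rw [PrimeSpectrum.isMin_iff]
  intro hmin
  refine hr.notMem_of_mem_minimalPrimes ?_ hq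
  rwa [Module.annihilator_eq_bot.mpr inferInstance]

theorem IsSMulRegular.height_add_one_le_height_comap_quotient (hr : IsSMulRegular R r)
    (Q : PrimeSpectrum (R ⧸ Ideal.span {r})) :
    Order.height Q + 1 ≤ Order.height (PrimeSpectrum.comap (Ideal.Quotient.mk _) Q) :=
  Order.height_add_one_le_height_of_strictMono
    (RingHom.strictMono_comap_of_surjective Ideal.Quotient.mk_surjective)
    (fun _ => hr.not_isMin_of_mem (by simp)) Q

theorem RingTheory.Sequence.IsRegular.quotient_span_singleton {rs : List R}
    (h : IsRegular R (r :: rs)) :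
    IsRegular (R ⧸ Ideal.span {r}) (rs.map (Ideal.Quotient.mk (Ideal.span {r}))) := by
  have hspan : Ideal.span {r} = r • (⊤ : Submodule R R) := by
    rw [← Submodule.ideal_span_singleton_smul, smul_eq_mul, Ideal.mul_top]
  let e : (R ⧸ Ideal.span {r}) ≃ₗ[R ⧸ Ideal.span {r}] QuotSMulTop r R :=
    (Submodule.quotEquivOfEq _ _ hspan).extendScalarsOfSurjective Ideal.Quotient.mk_surjective
  exact (e.isRegular_congr _).mpr ((isRegular_cons_iff' R r rs).mp h).2

theorem RingTheory.Sequence.IsRegular.length_le_height {rs : List R} (h : IsRegular R rs)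
    {P : PrimeSpectrum R} (hP : ∀ x ∈ rs, x ∈ P.asIdeal) :
    (rs.length : ℕ∞) ≤ Order.height P := by
  -- induct on the length: the tail of the sequence lives over a different ring
  obtain ⟨n, hn⟩ : ∃ n, rs.length = n := ⟨_, rfl⟩
  induction n generalizing R with
  | zero => simp [hn]
  | succ n ih =>
    obtain _ | ⟨r, rs⟩ := rs
    · simp at hn
    have hr : IsSMulRegular R r := ((isRegular_cons_iff R r rs).mp h).1
    obtain ⟨Q, rfl⟩ :
        P ∈ Set.range (PrimeSpectrum.comap (Ideal.Quotient.mk (Ideal.span {r}))) := by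
      rw [range_comap_of_surjective _ _ Ideal.Quotient.mk_surjective, Ideal.mk_ker,
        PrimeSpectrum.mem_zeroLocus, SetLike.coe_subset_coe, Ideal.span_singleton_le_iff_mem]
      exact hP r List.mem_cons_self
    have hQ : ∀ x ∈ rs.map (Ideal.Quotient.mk _), x ∈ Q.asIdeal := by
      simpa using fun x hx => hP x (List.mem_cons_of_mem r hx)
    calc ((r :: rs).length : ℕ∞) = (rs.map (Ideal.Quotient.mk _)).length + 1 := by simp
      _ ≤ Order.height Q + 1 := by
        gcongr
        exact ih h.quotient_span_singleton hQ (by simpa using hn)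
      _ ≤ _ := hr.height_add_one_le_height_comap_quotient Q

end

theorem stmt_12_general (R : Type*) [CommRing R] (I : Ideal R) :
    idealGrade I ≤ idealHeight I :=
  le_iInf₂ fun _ hIP => iSup₂_le fun _ hrs => iSup_le fun hreg =>
    hreg.length_le_height fun x hx => hIP (hrs x hx)

/-- In a Noetherian commutative ring, `grade I ≤ height I`. -/
theorem stmt_12 (R : Type*) [CommRing R] [IsNoetherianRing R] (I : Ideal R) :
    idealGrade I ≤ idealHeight I :=
  stmt_12_general R I
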